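/- Let b, N be positive integers, P_R, Ω_D, N_0 > 0, and let Ψ_1, …, Ψ_N be i.i.d. real random variables uniform on [−π/2^b, π/2^b), so that the signal received at the destination has combined channel v^T h_D = Σ_{n=1}^{N} √Ω_D · e^{iΨ_n}. Then the SNR at the destination, γ_RD := (P_R/N)·E[|v^T h_D|²] / N_0, equals P_R·Ω_D·(1 + (N−1)·Q) / N_0, where Q = ((2^b/π)·sin(π/2^b))². -/

import Mathlib

/-! Expanding `‖∑ n, exp (i Ψₙ)‖² = ∑ n, ∑ m, cos (Ψₙ - Ψₘ)`, the `N` diagonal terms equal `1`,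
and by independence every off-diagonal term has mean `(𝔼 cos Ψ)² + (𝔼 sin Ψ)²`. A phase uniform
on `[-t, t)` has `𝔼 cos Ψ = sin t / t` and `𝔼 sin Ψ = 0`, so each off-diagonal mean is
`Q = (sin t / t)²` with `t = π / 2 ^ b`. -/

open MeasureTheory ProbabilityTheory Real

section UniformOnIco

variable {Ω : Type*} [MeasurableSpace Ω] {μ : Measure Ω} {X : Ω → ℝ} {c t : ℝ}

theorem integral_comp_eq_mul_intervalIntegral_of_map_eq (hX : Measurable X) (hc : 0 ≤ c)
    (ht : 0 ≤ t) (hmap : μ.map X = ENNReal.ofReal c • volume.restrict (Set.Ico (-t) t))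
    {φ : ℝ → ℝ} (hφ : Measurable φ) :
    ∫ ω, φ (X ω) ∂μ = c * ∫ x in -t..t, φ x := by
  rw [← integral_map hX.aemeasurable hφ.aestronglyMeasurable, hmap, integral_smul_measure,
    smul_eq_mul, ENNReal.toReal_ofReal hc, setIntegral_congr_set Ico_ae_eq_Ioc,
    intervalIntegral.integral_of_le (by linarith)]

theorem integral_cos_of_map_eq (hX : Measurable X) (hc : 0 ≤ c) (ht : 0 ≤ t)
    (hmap : μ.map X = ENNReal.ofReal c • volume.restrict (Set.Ico (-t) t)) :
    ∫ ω, cos (X ω) ∂μ = 2 * c * sin t := by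
  rw [integral_comp_eq_mul_intervalIntegral_of_map_eq hX hc ht hmap measurable_cos,
    integral_cos, sin_neg]
  ring

theorem integral_sin_of_map_eq (hX : Measurable X) (hc : 0 ≤ c) (ht : 0 ≤ t)
    (hmap : μ.map X = ENNReal.ofReal c • volume.restrict (Set.Ico (-t) t)) :
    ∫ ω, sin (X ω) ∂μ = 0 := by
  rw [integral_comp_eq_mul_intervalIntegral_of_map_eq hX hc ht hmap measurable_sin,
    integral_sin, cos_neg, sub_self, mul_zero]

end UniformOnIco

theorem Complex.norm_sum_exp_I_mul_sq {ι : Type*} (s : Finset ι) (x : ι → ℝ) :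
    ‖∑ i ∈ s, exp (I * x i)‖ ^ 2 = ∑ i ∈ s, ∑ j ∈ s, Real.cos (x i - x j) := by
  have hexp : ∀ i, exp (I * x i) = (Real.cos (x i) : ℂ) + (Real.sin (x i) : ℂ) * I := by
    intro i
    rw [mul_comm, exp_mul_I, ← ofReal_cos, ← ofReal_sin]
  simp_rw [hexp, Finset.sum_add_distrib, ← Finset.sum_mul, ← ofReal_sum, Complex.sq_norm,
    normSq_add_mul_I, sq, Finset.sum_mul_sum, ← Finset.sum_add_distrib, Real.cos_sub]

theorem ProbabilityTheory.IndepFun.integral_cos_sub {Ω : Type*} [MeasurableSpace Ω]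
    {μ : Measure Ω} [IsFiniteMeasure μ] {X Y : Ω → ℝ} (hXY : IndepFun X Y μ)
    (hX : Measurable X) (hY : Measurable Y) :
    ∫ ω, cos (X ω - Y ω) ∂μ =
      (∫ ω, cos (X ω) ∂μ) * (∫ ω, cos (Y ω) ∂μ) + (∫ ω, sin (X ω) ∂μ) * (∫ ω, sin (Y ω) ∂μ) := by
  have hcos : ∫ ω, cos (X ω) * cos (Y ω) ∂μ = (∫ ω, cos (X ω) ∂μ) * (∫ ω, cos (Y ω) ∂μ) :=
    (hXY.comp measurable_cos measurable_cos).integral_mul_eq_mul_integral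
      (measurable_cos.comp hX).aestronglyMeasurable (measurable_cos.comp hY).aestronglyMeasurable
  have hsin : ∫ ω, sin (X ω) * sin (Y ω) ∂μ = (∫ ω, sin (X ω) ∂μ) * (∫ ω, sin (Y ω) ∂μ) :=
    (hXY.comp measurable_sin measurable_sin).integral_mul_eq_mul_integral
      (measurable_sin.comp hX).aestronglyMeasurable (measurable_sin.comp hY).aestronglyMeasurable
  have hbdd : ∀ {f : Ω → ℝ}, Measurable f → (∀ ω, |f ω| ≤ 1) → Integrable f μ := fun hf h =>
    .of_bound hf.aestronglyMeasurable 1 (ae_of_all _ h)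
  simp_rw [cos_sub]
  rw [integral_add, hcos, hsin]
  · exact hbdd ((measurable_cos.comp hX).mul (measurable_cos.comp hY)) fun ω => by
      rw [abs_mul]; exact mul_le_one₀ (abs_cos_le_one _) (abs_nonneg _) (abs_cos_le_one _)
  · exact hbdd ((measurable_sin.comp hX).mul (measurable_sin.comp hY)) fun ω => by
      rw [abs_mul]; exact mul_le_one₀ (abs_sin_le_one _) (abs_nonneg _) (abs_sin_le_one _)

theorem integral_norm_sum_exp_I_mul_sq {Ω ι : Type*} [MeasurableSpace Ω] {μ : Measure Ω}
    [IsProbabilityMeasure μ] [Fintype ι] {Ψ : ι → Ω → ℝ} (hΨ : ∀ i, Measurable (Ψ i))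
    (hindep : iIndepFun Ψ μ) {a : ℝ} (hcos : ∀ i, ∫ ω, cos (Ψ i ω) ∂μ = a)
    (hsin : ∀ i, ∫ ω, sin (Ψ i ω) ∂μ = 0) :
    ∫ ω, ‖∑ i, Complex.exp (Complex.I * Ψ i ω)‖ ^ 2 ∂μ =
      Fintype.card ι * (1 + (Fintype.card ι - 1) * a ^ 2) := by
  classical
  have hint : ∀ i j, Integrable (fun ω => cos (Ψ i ω - Ψ j ω)) μ := fun i j =>
    .of_bound ((measurable_cos.comp ((hΨ i).sub (hΨ j))).aestronglyMeasurable) 1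
      (ae_of_all _ fun ω => abs_cos_le_one _)
  have hpair : ∀ i j, ∫ ω, cos (Ψ i ω - Ψ j ω) ∂μ = a ^ 2 + if i = j then 1 - a ^ 2 else 0 := by
    intro i j
    split_ifs with hij
    · simp [hij]
    · rw [(hindep.indepFun hij).integral_cos_sub (hΨ i) (hΨ j), hcos, hcos, hsin, hsin]
      ring
  simp_rw [Complex.norm_sum_exp_I_mul_sq,
    integral_finsetSum _ fun i _ => integrable_finsetSum _ fun j _ => hint i j,
    integral_finsetSum _ fun j _ => hint _ j, hpair, Finset.sum_add_distrib, Finset.sum_ite_eq,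
    Finset.mem_univ, if_true, Finset.sum_const, Finset.card_univ, nsmul_eq_mul]
  ring

theorem destination_side_SNR_los_general
    {Ωs : Type*} [MeasurableSpace Ωs] (μ : Measure Ωs) [IsProbabilityMeasure μ]
    (b N : ℕ) (hN : 0 < N)
    (P_R Ω_D N_0 : ℝ) (hΩD : 0 < Ω_D)
    (Ψ : Fin N → Ωs → ℝ) (hmeas : ∀ n, Measurable (Ψ n))
    (hindep : iIndepFun Ψ μ)
    (hunif : ∀ n, Measure.map (Ψ n) μ =
      ENNReal.ofReal ((2 : ℝ) ^ b / (2 * π)) •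
        volume.restrict (Set.Ico (-(π / 2 ^ b)) (π / 2 ^ b))) :
    (P_R / N) * (∫ ω, ‖∑ n, (Real.sqrt Ω_D : ℂ) *
        Complex.exp (Complex.I * (Ψ n ω : ℂ))‖ ^ 2 ∂μ) / N_0 =
      P_R * Ω_D * (1 + ((N : ℝ) - 1) * ((2 : ℝ) ^ b / π * Real.sin (π / 2 ^ b)) ^ 2) / N_0 := by
  have hscale : ∀ ω, ‖∑ n, (Real.sqrt Ω_D : ℂ) * Complex.exp (Complex.I * (Ψ n ω : ℂ))‖ ^ 2 =
      Ω_D * ‖∑ n, Complex.exp (Complex.I * (Ψ n ω : ℂ))‖ ^ 2 := fun ω => by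
    rw [← Finset.mul_sum, norm_mul, mul_pow, Complex.norm_real, Real.norm_eq_abs, sq_abs,
      sq_sqrt hΩD.le]
  have hc : (0 : ℝ) ≤ 2 ^ b / (2 * π) := by positivity
  have ht : 0 ≤ π / 2 ^ b := by positivity
  have hcos : ∀ n, ∫ ω, cos (Ψ n ω) ∂μ = 2 ^ b / π * sin (π / 2 ^ b) := fun n => by
    rw [integral_cos_of_map_eq (hmeas n) hc ht (hunif n)]
    field_simp
  simp_rw [hscale]
  rw [integral_const_mul, integral_norm_sum_exp_I_mul_sq hmeas hindep hcos
    fun n => integral_sin_of_map_eq (hmeas n) hc ht (hunif n), Fintype.card_fin]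
  field_simp

/-- Destination-side SNR (Eq. (22) of Theorem 1): with i.i.d. quantization errors
`Ψ_n` uniform on `[-π/2^b, π/2^b)`, the SNR `(P_R/N)·E[|vᵀh_D|²]/N_0` equals
`P_R·Ω_D·(1+(N-1)Q)/N_0` where `Q = ((2^b/π)·sin(π/2^b))²`. -/
theorem destination_side_SNR_los
    {Ωs : Type*} [MeasurableSpace Ωs] (μ : Measure Ωs) [IsProbabilityMeasure μ]
    (b N : ℕ) (hb : 0 < b) (hN : 0 < N)
    (P_R Ω_D N_0 : ℝ) (hPR : 0 < P_R) (hΩD : 0 < Ω_D) (hN0 : 0 < N_0)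
    (Ψ : Fin N → Ωs → ℝ) (hmeas : ∀ n, Measurable (Ψ n))
    (hindep : iIndepFun Ψ μ)
    (hunif : ∀ n, Measure.map (Ψ n) μ =
      ENNReal.ofReal ((2 : ℝ) ^ b / (2 * π)) •
        volume.restrict (Set.Ico (-(π / 2 ^ b)) (π / 2 ^ b))) :
    (P_R / N) * (∫ ω, ‖∑ n, (Real.sqrt Ω_D : ℂ) *
        Complex.exp (Complex.I * (Ψ n ω : ℂ))‖ ^ 2 ∂μ) / N_0 =
      P_R * Ω_D * (1 + ((N : ℝ) - 1) * ((2 : ℝ) ^ b / π * Real.sin (π / 2 ^ b)) ^ 2) / N_0 :=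
  destination_side_SNR_los_general μ b N hN P_R Ω_D N_0 hΩD Ψ hmeas hindep hunif
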